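/- arXiv:2206.02604 — 3 statements merged into one kernel-verified Lean document; each statement's English description precedes it below -/
import Mathlib

section
/- Let m ≥ 2 be an integer, ν > 0, and let V be uniformly distributed on the closed Euclidean ball of radius ν centered at the origin in ℝ^m. Then for every unit vector e ∈ ℝ^m and every t with 0 < t < 1, P(|⟨e, V⟩| > tν) ≤ (m/√π) · exp(−(m+1)t²/2). -/
/-!
If `|⟪e, x⟫| > tν` for `x` in the ball of radius `ν`, say `⟪e, x⟫ > tν`, then
`‖x - tν e‖² ≤ ν² - 2tν⟪e, x⟫ + t²ν² ≤ (1 - t²)ν²`: the cap lies in the half of the ball of radius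
`ν√(1 - t²)` about `tν e` beyond its centre. The two caps are mirror images, so together they
have at most the volume of that smaller ball, i.e. probability at most `√(1 - t²)^m`. Finally
`(1 - t²)^m e^{(m+1)t²} ≤ (m/(m+1))^m e ≤ m²/π` (maximise over `t²` via `u ≤ e^{u-1}`,
then use `eπ < 9`).
-/

open Real MeasureTheory Metric ProbabilityTheory

theorem one_sub_pow_mul_exp_le {m : ℕ} (hm : 0 < m) {s : ℝ} (hs : s ≤ 1) :
    (1 - s) ^ m * exp ((m + 1) * s) ≤ (m / (m + 1)) ^ m * exp 1 := by
  -- write `1 - s = m / (m + 1) * u` and use `u ≤ exp (u - 1)`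
  obtain ⟨u, hu, rfl⟩ : ∃ u : ℝ, 0 ≤ u ∧ s = 1 - m / (m + 1) * u :=
    ⟨(m + 1) * (1 - s) / m, by positivity [sub_nonneg.2 hs], by field_simp; ring⟩
  have hu_pow : u ^ m ≤ exp (1 - (m + 1) * (1 - m / (m + 1) * u)) :=
    calc u ^ m ≤ exp (u - 1) ^ m := pow_le_pow_left₀ hu (by linarith [add_one_le_exp (u - 1)]) m
      _ = exp (1 - (m + 1) * (1 - m / (m + 1) * u)) := by
        rw [← exp_nat_mul]; congr 1; field_simp; ring
  calc (1 - (1 - m / (m + 1) * u)) ^ m * exp ((m + 1) * (1 - m / (m + 1) * u))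
        = (m / (m + 1)) ^ m * (u ^ m * exp ((m + 1) * (1 - m / (m + 1) * u))) := by
        rw [sub_sub_cancel, mul_pow, mul_assoc]
    _ ≤ (m / (m + 1)) ^ m * (exp (1 - (m + 1) * (1 - m / (m + 1) * u)) *
          exp ((m + 1) * (1 - m / (m + 1) * u))) := by gcongr
    _ = (m / (m + 1)) ^ m * exp 1 := by rw [← exp_add, sub_add_cancel]

theorem one_sub_pow_mul_exp_le_sq_div_pi {m : ℕ} (hm : 2 ≤ m) {s : ℝ} (hs : s ≤ 1) :
    (1 - s) ^ m * exp ((m + 1) * s) ≤ m ^ 2 / π := by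
  have hm' : (2 : ℝ) ≤ m := by exact_mod_cast hm
  have hq : (m / (m + 1) : ℝ) ^ m ≤ (m / (m + 1)) ^ 2 :=
    pow_le_pow_of_le_one (by positivity) (by rw [div_le_one (by positivity)]; linarith) hm
  -- `e π < 9 ≤ (m + 1) ^ 2`
  have hepi : exp 1 * π ≤ (m + 1) ^ 2 := by
    nlinarith [exp_one_lt_d9, pi_lt_d2, pi_pos, exp_pos 1]
  calc (1 - s) ^ m * exp ((m + 1) * s) ≤ (m / (m + 1)) ^ m * exp 1 :=
        one_sub_pow_mul_exp_le (by omega) hs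
    _ ≤ (m / (m + 1)) ^ 2 * exp 1 := by gcongr
    _ = m ^ 2 * (exp 1 * π) / ((m + 1) ^ 2 * π) := by field_simp
    _ ≤ m ^ 2 * (m + 1) ^ 2 / ((m + 1) ^ 2 * π) := by gcongr
    _ = m ^ 2 / π := by field_simp

theorem sqrt_one_sub_sq_pow_le {m : ℕ} (hm : 2 ≤ m) {t : ℝ} (ht : t ^ 2 ≤ 1) :
    √(1 - t ^ 2) ^ m ≤ m / √π * exp (-(m + 1) * t ^ 2 / 2) := by
  rw [← pow_le_pow_iff_left₀ (by positivity) (by positivity) two_ne_zero, ← pow_mul, mul_comm,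
    pow_mul, sq_sqrt (by linarith), mul_pow, div_pow, sq_sqrt pi_pos.le, ← exp_nat_mul]
  calc (1 - t ^ 2) ^ m = (1 - t ^ 2) ^ m * exp ((m + 1) * t ^ 2) * exp (-((m + 1) * t ^ 2)) := by
        rw [mul_assoc, ← exp_add, add_neg_cancel, exp_zero, mul_one]
    _ ≤ m ^ 2 / π * exp (-((m + 1) * t ^ 2)) := by
        gcongr; exact one_sub_pow_mul_exp_le_sq_div_pi hm ht
    _ = m ^ 2 / π * exp ((2 : ℕ) * (-(m + 1) * t ^ 2 / 2)) := by push_cast; ring_nf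

section HaarMeasure

variable {E : Type*} [NormedAddCommGroup E] [InnerProductSpace ℝ E]

theorem closedBall_inter_lt_inner_subset {e : E} (he : ‖e‖ = 1) {a : ℝ} (ha : 0 ≤ a) (R : ℝ) :
    closedBall 0 R ∩ {x | a < inner ℝ e x} ⊆
      closedBall (a • e) √(R ^ 2 - a ^ 2) ∩ {x | inner ℝ e (a • e) < inner ℝ e x} := by
  have hee : inner ℝ e (a • e) = a := by
    rw [real_inner_smul_right, real_inner_self_eq_norm_sq, he]; ring
  rintro x ⟨hxR, hx⟩
  rw [mem_closedBall_zero_iff] at hxR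
  refine ⟨?_, show inner ℝ e (a • e) < inner ℝ e x by rwa [hee]⟩
  rw [mem_closedBall, dist_eq_norm]
  refine Real.le_sqrt_of_sq_le ?_
  rw [norm_sub_sq_real, real_inner_smul_right, real_inner_comm, norm_smul, he,
    Real.norm_of_nonneg ha]
  nlinarith [norm_nonneg x, mul_le_mul_of_nonneg_left hx.le ha]

variable [FiniteDimensional ℝ E] [MeasurableSpace E] [BorelSpace E]
  (μ : Measure E) [μ.IsAddHaarMeasure]

theorem two_mul_measure_closedBall_inter_halfspace_le (c e : E) (r : ℝ) :
    2 * μ (closedBall c r ∩ {x | inner ℝ e c < inner ℝ e x}) ≤ μ (closedBall c r) := by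
  set H := closedBall c r ∩ {x | inner ℝ e c < inner ℝ e x}
  set H' := closedBall c r ∩ {x | inner ℝ e x < inner ℝ e c}
  have hcont : Continuous fun x : E => inner ℝ e x := continuous_const.inner continuous_id
  -- the point reflection through `c` swaps the two open half-balls
  have hreflect : (fun x => (2 : ℝ) • c - x) ⁻¹' H' = H := by
    ext x
    have hdist : dist ((2 : ℝ) • c - x) c = dist x c := by
      rw [dist_eq_norm, dist_eq_norm, ← norm_neg]; congr 1; module
    simp only [H, H', Set.mem_preimage, Set.mem_inter_iff, Set.mem_ofPred_eq, mem_closedBall,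
      hdist, inner_sub_right, real_inner_smul_right]
    constructor <;> rintro ⟨h₁, h₂⟩ <;> exact ⟨h₁, by linarith⟩
  have hH' : MeasurableSet H' :=
    measurableSet_closedBall.inter (measurableSet_lt hcont.measurable measurable_const)
  have hdisj : Disjoint H H' := by
    rw [Set.disjoint_left]
    rintro x ⟨-, h⟩ ⟨-, h'⟩
    exact lt_asymm (α := ℝ) h h'
  calc 2 * μ H = μ H + μ H' := by
        rw [two_mul, ← hreflect, (Measure.measurePreserving_sub_left μ _).measure_preimage
          hH'.nullMeasurableSet]
    _ = μ (H ∪ H') := (measure_union hdisj hH').symm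
    _ ≤ μ (closedBall c r) := measure_mono (Set.union_subset Set.inter_subset_left
          Set.inter_subset_left)

theorem measure_closedBall_inter_lt_abs_inner_le {e : E} (he : ‖e‖ = 1) {a : ℝ} (ha : 0 ≤ a)
    (R : ℝ) : μ (closedBall 0 R ∩ {x | a < |inner ℝ e x|}) ≤ μ (closedBall 0 √(R ^ 2 - a ^ 2)) := by
  set P := closedBall (0 : E) R ∩ {x | a < inner ℝ e x}
  have hsplit : closedBall 0 R ∩ {x | a < |inner ℝ e x|} ⊆ P ∪ -P := by
    rintro x ⟨hxR, hx⟩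
    rcases lt_abs.1 (show a < |inner ℝ e x| from hx) with h | h
    · exact Or.inl ⟨hxR, h⟩
    · exact Or.inr ⟨by simpa using hxR, by simpa [inner_neg_right] using h⟩
  calc μ (closedBall 0 R ∩ {x | a < |inner ℝ e x|}) ≤ μ P + μ (-P) :=
        (measure_mono hsplit).trans (measure_union_le _ _)
    _ = 2 * μ P := by rw [Measure.measure_neg, two_mul]
    _ ≤ 2 * μ (closedBall (a • e) √(R ^ 2 - a ^ 2) ∩ {x | inner ℝ e (a • e) < inner ℝ e x}) := by
        gcongr; exact closedBall_inter_lt_inner_subset he ha R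
    _ ≤ μ (closedBall (a • e) √(R ^ 2 - a ^ 2)) :=
        two_mul_measure_closedBall_inter_halfspace_le μ _ _ _
    _ = μ (closedBall 0 √(R ^ 2 - a ^ 2)) := Measure.addHaar_closedBall_center μ _ _

theorem cond_closedBall_lt_abs_inner_le {e : E} (he : ‖e‖ = 1) {t : ℝ} (ht₀ : 0 ≤ t) {ν : ℝ}
    (hν : 0 < ν) :
    μ[{x | t * ν < |inner ℝ e x|} | closedBall 0 ν]
      ≤ ENNReal.ofReal (√(1 - t ^ 2) ^ Module.finrank ℝ E) := by
  have hradius : √(ν ^ 2 - (t * ν) ^ 2) = √(1 - t ^ 2) * ν := by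
    rw [show ν ^ 2 - (t * ν) ^ 2 = (1 - t ^ 2) * ν ^ 2 by ring, Real.sqrt_mul' _ (sq_nonneg ν),
      Real.sqrt_sq hν.le]
  have hball₀ : μ (closedBall 0 ν) ≠ 0 := (measure_closedBall_pos μ 0 hν).ne'
  have hball : μ (closedBall 0 ν) ≠ ⊤ := measure_closedBall_lt_top.ne
  rw [cond_apply measurableSet_closedBall]
  calc (μ (closedBall 0 ν))⁻¹ * μ (closedBall 0 ν ∩ {x | t * ν < |inner ℝ e x|})
      ≤ (μ (closedBall 0 ν))⁻¹ * μ (closedBall 0 (√(1 - t ^ 2) * ν)) := by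
        rw [← hradius]
        exact mul_le_mul_right (measure_closedBall_inter_lt_abs_inner_le μ he
          (mul_nonneg ht₀ hν.le) ν) _
    _ = ENNReal.ofReal (√(1 - t ^ 2) ^ Module.finrank ℝ E) := by
        rw [Measure.addHaar_closedBall_mul μ 0 (Real.sqrt_nonneg _) hν.le, mul_comm,
          ENNReal.mul_inv_cancel_right hball₀ hball]

end HaarMeasure

/-- Tail bound for the projection of a uniform point of the `m`-dimensional
Euclidean ball of radius `ν` onto a unit direction: the uniform measure of the
set where the projection exceeds `tν` in absolute value is at most
`(m/√π)·exp(-(m+1)t²/2)`. -/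
theorem uniform_ball_projection_tail (m : ℕ) (hm : 2 ≤ m) (ν : ℝ) (hν : 0 < ν)
    (e : EuclideanSpace ℝ (Fin m)) (he : ‖e‖ = 1)
    (t : ℝ) (ht0 : 0 < t) (ht1 : t < 1) :
    ((volume (Metric.closedBall (0 : EuclideanSpace ℝ (Fin m)) ν))⁻¹ •
        volume.restrict (Metric.closedBall (0 : EuclideanSpace ℝ (Fin m)) ν))
      {x : EuclideanSpace ℝ (Fin m) | t * ν < |(inner ℝ e x : ℝ)|}
    ≤ ENNReal.ofReal ((m / Real.sqrt Real.pi) *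
        Real.exp (-((m : ℝ) + 1) * t ^ 2 / 2)) := by
  -- the left-hand side is `volume[· | closedBall 0 ν]` unfolded
  have hball : volume[{x | t * ν < |inner ℝ e x|} | closedBall 0 ν]
      ≤ ENNReal.ofReal (√(1 - t ^ 2) ^ m) := by
    simpa using cond_closedBall_lt_abs_inner_le volume he ht0.le hν
  exact hball.trans (ENNReal.ofReal_le_ofReal (sqrt_one_sub_sq_pow_le hm (by nlinarith)))
end

section
/- Let ℓ be a Bregman loss ℓ(z, w) = F(w) − F(z) − ⟨∇F(z), w − z⟩ with F differentiable, μ a probability measure on ℝ^d with the needed integrability, and gen(s, w) = E_{Z∼μ}[ℓ(Z, w)] − (1/n)Σ_j ℓ(z_j, w). Let S_i = (Z_{i,1},...,Z_{i,n}) ∼ μ^⊗n, let W_1, ..., W_K be ℝ^d-valued random variables such that W_j is independent of S_i for every j ≠ i and all relevant expectations are finite, and set W̄ = (W_1 + ... + W_K)/K. Then E[gen(S_i, W̄)] = (1/K) · E[gen(S_i, W_i)]. -/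
open MeasureTheory

/-- The Bregman loss associated with a differentiable function `F`. -/
noncomputable def bregmanLoss {d : ℕ} (F : EuclideanSpace ℝ (Fin d) → ℝ)
    (z v : EuclideanSpace ℝ (Fin d)) : ℝ :=
  F v - F z - inner ℝ (gradient F z) (v - z)

/-- The generalization error of hypothesis `w` on the dataset `s` for loss `ℓ`
under data distribution `μ`. -/
noncomputable def genErr {Z W : Type*} [MeasurableSpace Z] (μ : Measure Z)
    (ℓ : Z → W → ℝ) {n : ℕ} (s : Fin n → Z) (w : W) : ℝ :=
  (∫ z, ℓ z w ∂μ) - (1 / n) * ∑ j, ℓ (s j) w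


/-!
For a Bregman loss, `w ↦ gen(s, w)` is affine: `gen(s, w) = ⟪g s, w⟫ + c s`, where `g` and `c`
are empirical-minus-population means of `∇F` and of `z ↦ F z - ⟪∇F z, z⟫`, so `g (S_i)` and
`c (S_i)` have mean zero as soon as every coordinate of `S_i` has law `μ`. Affinity gives
`gen(S_i, W̄) = (1/K) ∑ⱼ gen(S_i, W_j)`, and for `j ≠ i` independence of `W_j` from `S_i` gives
`E ⟪g (S_i), W_j⟫ = ⟪E g (S_i), E W_j⟫ = 0`, so only the term `j = i` survives.
-/

open ProbabilityTheory
open scoped RealInnerProductSpace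

theorem measurable_gradient {E : Type*} [NormedAddCommGroup E] [InnerProductSpace ℝ E]
    [CompleteSpace E] [MeasurableSpace E] [BorelSpace E] (F : E → ℝ) :
    Measurable (gradient F) :=
  (InnerProductSpace.toDual ℝ E).symm.continuous.measurable.comp (measurable_fderiv ℝ F)

theorem ProbabilityTheory.HasLaw.integrable_comp {Ω Z V : Type*} [MeasurableSpace Ω]
    [MeasurableSpace Z] [NormedAddCommGroup V] {P : Measure Ω} {μ : Measure Z} {X : Ω → Z}
    (hX : HasLaw X μ P) {f : Z → V} (hf : Integrable f μ) : Integrable (fun ω => f (X ω)) P := by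
  rw [← hX.map_eq] at hf
  exact (integrable_map_measure hf.aestronglyMeasurable hX.aemeasurable).mp hf

section EmpiricalDeviation

variable {Z V : Type*} [MeasurableSpace Z] [NormedAddCommGroup V] [NormedSpace ℝ V] {n : ℕ}

noncomputable def empiricalDeviation (μ : Measure Z) (f : Z → V) (s : Fin n → Z) : V :=
  (n : ℝ)⁻¹ • ∑ j, f (s j) - ∫ z, f z ∂μ

theorem measurable_empiricalDeviation [MeasurableSpace V] [BorelSpace V]
    [SecondCountableTopology V] (μ : Measure Z) {f : Z → V} (hf : Measurable f) :
    Measurable (empiricalDeviation (n := n) μ f) :=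
  ((Finset.univ.measurable_sum fun j _ => hf.comp (measurable_pi_apply j)).const_smul _).sub_const _

variable {Ω : Type*} [MeasurableSpace Ω] {P : Measure Ω} {μ : Measure Z} {f : Z → V}
  {S : Ω → Fin n → Z}

theorem integrable_empiricalDeviation_comp [IsFiniteMeasure P]
    (hS : ∀ j, HasLaw (fun ω => S ω j) μ P) (hf : Integrable f μ) :
    Integrable (fun ω => empiricalDeviation μ f (S ω)) P :=
  ((integrable_finsetSum _ fun j _ => (hS j).integrable_comp hf).fun_smul _).sub
    (integrable_const _)

theorem integral_empiricalDeviation_comp [CompleteSpace V] [IsProbabilityMeasure P] (hn : n ≠ 0)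
    (hS : ∀ j, HasLaw (fun ω => S ω j) μ P) (hf : Integrable f μ) :
    ∫ ω, empiricalDeviation μ f (S ω) ∂P = 0 := by
  have hsum := integrable_finsetSum Finset.univ fun j _ => (hS j).integrable_comp hf
  simp only [empiricalDeviation]
  rw [integral_sub (hsum.fun_smul _) (integrable_const _), integral_smul,
    integral_finsetSum _ fun j _ => (hS j).integrable_comp hf]
  have hcoord (j : Fin n) : ∫ ω, f (S ω j) ∂P = ∫ z, f z ∂μ :=
    (hS j).integral_comp hf.aestronglyMeasurable
  have hn' : (n : ℝ) ≠ 0 := Nat.cast_ne_zero.mpr hn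
  simp only [hcoord, Finset.sum_const, Finset.card_univ, Fintype.card_fin,
    ← Nat.cast_smul_eq_nsmul ℝ, smul_smul, inv_mul_cancel₀ hn', one_smul, integral_const,
    probReal_univ, sub_self]

end EmpiricalDeviation

section AffineLoss

variable {Z E : Type*} [MeasurableSpace Z] [NormedAddCommGroup E] [InnerProductSpace ℝ E]
  [CompleteSpace E] {μ : Measure Z} [IsProbabilityMeasure μ] {ℓ : Z → E → ℝ} {h : E → ℝ}
  {a : Z → E} {b : Z → ℝ}

theorem genErr_eq_inner_add_of_affine (hℓ : ∀ z w, ℓ z w = h w - (⟪a z, w⟫ + b z))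
    (ha : Integrable a μ) (hb : Integrable b μ) {n : ℕ} (hn : n ≠ 0) (s : Fin n → Z) (w : E) :
    genErr μ ℓ s w = ⟪empiricalDeviation μ a s, w⟫ + empiricalDeviation μ b s := by
  have hint : ∫ z, ℓ z w ∂μ = h w - (⟪(∫ z, a z ∂μ), w⟫ + (∫ z, b z ∂μ)) := by
    have hinner : ∫ z, ⟪a z, w⟫ ∂μ = ⟪(∫ z, a z ∂μ), w⟫ := by
      simpa only [real_inner_comm w] using integral_inner ha w
    simp only [hℓ]
    rw [integral_sub (integrable_const _) ((ha.inner_const w).fun_add hb), integral_const,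
      integral_add (ha.inner_const w) hb, hinner, probReal_univ, one_smul]
  have hn' : (n : ℝ) ≠ 0 := Nat.cast_ne_zero.mpr hn
  rw [genErr, hint]
  simp only [empiricalDeviation, hℓ, Finset.sum_sub_distrib, Finset.sum_add_distrib,
    Finset.sum_const, Finset.card_univ, Fintype.card_fin, inner_sub_left, real_inner_smul_left,
    sum_inner, smul_eq_mul, nsmul_eq_mul]
  field_simp
  ring

end AffineLoss

theorem bregmanLoss_eq {d : ℕ} (F : EuclideanSpace ℝ (Fin d) → ℝ)
    (z w : EuclideanSpace ℝ (Fin d)) :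
    bregmanLoss F z w = F w - (⟪gradient F z, w⟫ + (F z - ⟪gradient F z, z⟫)) := by
  rw [bregmanLoss, inner_sub_right]
  ring

section Averaging

variable {Ω E : Type*} [MeasurableSpace Ω] {P : Measure Ω} [NormedAddCommGroup E]
  [InnerProductSpace ℝ E] [MeasurableSpace E] [BorelSpace E]
  {X Y : Ω → E} {C : Ω → ℝ}

theorem ProbabilityTheory.IndepFun.integrable_inner (hXY : IndepFun X Y P)
    (hX : Integrable X P) (hY : Integrable Y P) : Integrable (fun ω => ⟪X ω, Y ω⟫) P :=
  hXY.integrable_bilin hX hY (innerSL ℝ)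

theorem ProbabilityTheory.IndepFun.integral_inner [CompleteSpace E] (hXY : IndepFun X Y P)
    (hX : Integrable X P) (hY : Integrable Y P) :
    ∫ ω, ⟪X ω, Y ω⟫ ∂P = ⟪(∫ ω, X ω ∂P), ∫ ω, Y ω ∂P⟫ :=
  hXY.integral_bilin hX hY (innerSL ℝ)

theorem integral_inner_add_eq_zero_of_indepFun [CompleteSpace E] (hXY : IndepFun X Y P)
    (hX : Integrable X P) (hY : Integrable Y P) (hC : Integrable C P) (hX0 : ∫ ω, X ω ∂P = 0)
    (hC0 : ∫ ω, C ω ∂P = 0) : ∫ ω, ⟪X ω, Y ω⟫ + C ω ∂P = 0 := by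
  rw [integral_add (hXY.integrable_inner hX hY) hC, hXY.integral_inner hX hY, hX0, hC0,
    inner_zero_left, add_zero]

theorem integral_inner_average_add [CompleteSpace E] {ι : Type*} [Fintype ι] {W : ι → Ω → E}
    (i : ι) (hX : Integrable X P) (hC : Integrable C P) (hW : ∀ j, Integrable (W j) P)
    (hX0 : ∫ ω, X ω ∂P = 0) (hC0 : ∫ ω, C ω ∂P = 0)
    (hindep : ∀ j ≠ i, IndepFun X (W j) P)
    (hi : Integrable (fun ω => ⟪X ω, W i ω⟫ + C ω) P) :
    ∫ ω, ⟪X ω, (Fintype.card ι : ℝ)⁻¹ • ∑ j, W j ω⟫ + C ω ∂P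
      = (Fintype.card ι : ℝ)⁻¹ * ∫ ω, ⟪X ω, W i ω⟫ + C ω ∂P := by
  have : Nonempty ι := ⟨i⟩
  have hcard : (Fintype.card ι : ℝ) ≠ 0 := Nat.cast_ne_zero.mpr Fintype.card_ne_zero
  have haverage (ω : Ω) : ⟪X ω, (Fintype.card ι : ℝ)⁻¹ • ∑ j, W j ω⟫ + C ω
      = (Fintype.card ι : ℝ)⁻¹ * ∑ j, (⟪X ω, W j ω⟫ + C ω) := by
    rw [real_inner_smul_right, inner_sum, Finset.sum_add_distrib, Finset.sum_const,
      Finset.card_univ, nsmul_eq_mul]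
    field_simp
  have hint (j : ι) : Integrable (fun ω => ⟪X ω, W j ω⟫ + C ω) P := by
    by_cases hj : j = i
    · exact hj ▸ hi
    · exact ((hindep j hj).integrable_inner hX (hW j)).add hC
  simp only [haverage]
  rw [integral_const_mul, integral_finsetSum _ fun j _ => hint j,
    Finset.sum_eq_single i (fun j _ hj => integral_inner_add_eq_zero_of_indepFun (hindep j hj)
      hX (hW j) hC hX0 hC0) (by simp)]

end Averaging

theorem bregman_distributed_gen_general {Ω : Type*} [MeasurableSpace Ω]
    (P : Measure Ω) [IsProbabilityMeasure P]
    {d n K : ℕ} (hn : 0 < n) (i : Fin K)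
    (F : EuclideanSpace ℝ (Fin d) → ℝ)
    (μ : Measure (EuclideanSpace ℝ (Fin d))) [IsProbabilityMeasure μ]
    (hF1 : Integrable F μ)
    (hF2 : Integrable (fun z => gradient F z) μ)
    (hF3 : Integrable (fun z => (inner ℝ (gradient F z) z : ℝ)) μ)
    (S : Ω → Fin n → EuclideanSpace ℝ (Fin d))
    (hSlaw : P.map S = Measure.pi fun _ => μ)
    (W : Fin K → Ω → EuclideanSpace ℝ (Fin d))
    (hWint : ∀ j, Integrable (W j) P)
    (hindep : ∀ j, j ≠ i → ProbabilityTheory.IndepFun (W j) S P)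
    (hgenint' : ∀ j,
      Integrable (fun ω => genErr μ (bregmanLoss F) (S ω) (W j ω)) P) :
    ∫ ω, genErr μ (bregmanLoss F) (S ω) ((K : ℝ)⁻¹ • ∑ j, W j ω) ∂P
      = (1 / K) * ∫ ω, genErr μ (bregmanLoss F) (S ω) (W i ω) ∂P := by
  -- `P.map S = 0` unless `S` is a.e.-measurable
  have hS : HasLaw S (Measure.pi fun _ => μ) P :=
    ⟨.of_map_ne_zero (hSlaw ▸ IsProbabilityMeasure.ne_zero _), hSlaw⟩
  have hcoord (j : Fin n) : HasLaw (fun ω => S ω j) μ P :=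
    (measurePreserving_eval _ j).fun_comp_hasLaw hS
  have hb : Integrable (fun z => F z - ⟪gradient F z, z⟫) μ := hF1.sub hF3
  simp only [genErr_eq_inner_add_of_affine (bregmanLoss_eq F) hF2 hb hn.ne'] at hgenint' ⊢
  have hindep' (j : Fin K) (hj : j ≠ i) :=
    (hindep j hj).symm.comp (measurable_empiricalDeviation μ (measurable_gradient F)) measurable_id
  simpa only [Fintype.card_fin, one_div] using integral_inner_average_add i
    (integrable_empiricalDeviation_comp hcoord hF2) (integrable_empiricalDeviation_comp hcoord hb)
    hWint (integral_empiricalDeviation_comp hn.ne' hcoord hF2)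
    (integral_empiricalDeviation_comp hn.ne' hcoord hb) hindep' (hgenint' i)

/-- For a Bregman loss, if `S_i ∼ μ^⊗n` and `W_j` is independent of `S_i` for
every `j ≠ i`, then the expected generalization error of the aggregated model
`W̄ = (W_1 + ⋯ + W_K)/K` on `S_i` equals `(1/K)` times that of `W_i`. -/
theorem bregman_distributed_gen {Ω : Type*} [MeasurableSpace Ω]
    (P : Measure Ω) [IsProbabilityMeasure P]
    {d n K : ℕ} (hn : 0 < n) (hK : 0 < K) (i : Fin K)
    (F : EuclideanSpace ℝ (Fin d) → ℝ) (hF : Differentiable ℝ F)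
    (μ : Measure (EuclideanSpace ℝ (Fin d))) [IsProbabilityMeasure μ]
    (hF1 : Integrable F μ)
    (hF2 : Integrable (fun z => gradient F z) μ)
    (hF3 : Integrable (fun z => (inner ℝ (gradient F z) z : ℝ)) μ)
    (S : Ω → Fin n → EuclideanSpace ℝ (Fin d)) (hS : Measurable S)
    (hSlaw : P.map S = Measure.pi fun _ => μ)
    (W : Fin K → Ω → EuclideanSpace ℝ (Fin d))
    (hW : ∀ j, Measurable (W j))
    (hWint : ∀ j, Integrable (W j) P)
    (hindep : ∀ j, j ≠ i → ProbabilityTheory.IndepFun (W j) S P)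
    (hgenint : Integrable
      (fun ω => genErr μ (bregmanLoss F) (S ω) ((K : ℝ)⁻¹ • ∑ j, W j ω)) P)
    (hgenint' : ∀ j,
      Integrable (fun ω => genErr μ (bregmanLoss F) (S ω) (W j ω)) P) :
    ∫ ω, genErr μ (bregmanLoss F) (S ω) ((K : ℝ)⁻¹ • ∑ j, W j ω) ∂P
      = (1 / K) * ∫ ω, genErr μ (bregmanLoss F) (S ω) (W i ω) ∂P :=
  bregman_distributed_gen_general P hn i F μ hF1 hF2 hF3 S hSlaw W hWint hindep hgenint'
end

section
/- Let W be an ℝ^m-valued random variable with ‖W‖ ≤ c almost surely for some c > 0, let V be uniformly distributed on the closed Euclidean ball of radius ν > 0 in ℝ^m, independent of W, and set Ŵ = W + V. Then I(W; Ŵ) ≤ m · log((c + ν)/ν). -/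
/-!
By independence, the law of `(W, W + V)` is the image of `μ_W ⊗ unif(B(0, ν))` under
`(w, v) ↦ (w, w + v)`. For `‖w‖ ≤ c` the translate `B(w, ν)` lies in `B(0, c + ν)`, so this law is
at most `K • (μ_W ⊗ Q)` with `Q` uniform on `B(0, c + ν)` and `K = vol B(0, c + ν) / vol B(0, ν)
= ((c + ν) / ν) ^ m`. Replacing the second marginal of the reference measure by `Q` can only increase
the divergence (by the chain rule the increase is `KL(μ_{W+V} ‖ Q) ≥ 0`), and a density bounded by
`K` has divergence at most `log K`.
-/

open MeasureTheory
open scoped ENNReal Classical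

/-- The Kullback–Leibler divergence between two measures, with value `∞` when
`μ` is not absolutely continuous w.r.t. `ν` or the log-likelihood ratio is not
integrable. -/
noncomputable def klDiv {α : Type*} [MeasurableSpace α] (μ ν : Measure α) : ℝ≥0∞ :=
  if μ ≪ ν ∧ Integrable (llr μ ν) μ then ENNReal.ofReal (∫ x, llr μ ν x ∂μ) else ∞

/-- The mutual information between two random variables: KL divergence of the
joint law from the product of the marginal laws. -/
noncomputable def mutualInfo {Ω α β : Type*}
    [MeasurableSpace Ω] [MeasurableSpace α] [MeasurableSpace β]
    (P : Measure Ω) (X : Ω → α) (Y : Ω → β) : ℝ≥0∞ :=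
  klDiv (P.map fun ω => (X ω, Y ω)) ((P.map X).prod (P.map Y))

open ProbabilityTheory

section

variable {α β : Type*} [MeasurableSpace α] [MeasurableSpace β]

/-- `InformationTheory.klDiv` carries the correction term `ν univ - μ univ`, which vanishes here. -/
lemma klDiv_eq_informationTheory_klDiv (μ ν : Measure α) [IsFiniteMeasure μ] [IsFiniteMeasure ν]
    (h : μ Set.univ = ν Set.univ) : klDiv μ ν = InformationTheory.klDiv μ ν := by
  by_cases hfin : μ ≪ ν ∧ Integrable (llr μ ν) μ
  · rw [klDiv, if_pos hfin, InformationTheory.klDiv_of_ac_of_integrable hfin.1 hfin.2,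
      measureReal_def, measureReal_def, h, add_sub_cancel_right]
  · rw [klDiv, if_neg hfin, eq_comm, InformationTheory.klDiv_eq_top_iff]
    exact fun hac hint => hfin ⟨hac, hint⟩

namespace MeasureTheory.Measure

lemma rnDeriv_le_of_le_smul {μ ν : Measure α} [SigmaFinite μ] [SigmaFinite ν] {K : ℝ≥0∞}
    (h : μ ≤ K • ν) : μ.rnDeriv ν ≤ᵐ[ν] fun _ => K := by
  refine ae_le_of_forall_setLIntegral_le_of_sigmaFinite (measurable_rnDeriv μ ν) fun s _ _ => ?_
  rw [setLIntegral_rnDeriv (absolutelyContinuous_of_le_smul h), setLIntegral_const]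
  exact h s

lemma map_prod_prodMk_le_smul_prod {γ : Type*} [MeasurableSpace γ] (μ : Measure α)
    (ν : Measure β) (Q : Measure γ) [SFinite ν] [SFinite Q] {f : α → β → γ}
    (hf : Measurable (Function.uncurry f)) {K : ℝ≥0∞} (h : ∀ᵐ a ∂μ, ν.map (f a) ≤ K • Q) :
    (μ.prod ν).map (fun p => (p.1, f p.1 p.2)) ≤ K • μ.prod Q := by
  have hg : Measurable fun p : α × β => (p.1, f p.1 p.2) := measurable_fst.prodMk hf
  refine le_iff.2 fun s hs => ?_
  rw [map_apply hg hs, prod_apply (hg hs), smul_apply, smul_eq_mul, prod_apply hs,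
    ← lintegral_const_mul K (measurable_measure_prodMk_left hs)]
  refine lintegral_mono_ae ?_
  filter_upwards [h] with a ha
  calc ν (Prod.mk a ⁻¹' ((fun p : α × β => (p.1, f p.1 p.2)) ⁻¹' s))
      = ν.map (f a) (Prod.mk a ⁻¹' s) :=
        (map_apply (hf.comp measurable_prodMk_left) (measurable_prodMk_left hs)).symm
    _ ≤ K * Q (Prod.mk a ⁻¹' s) := ha _

lemma addHaar_closedBall_div_addHaar_closedBall {E : Type*} [NormedAddCommGroup E]
    [NormedSpace ℝ E] [MeasurableSpace E] [BorelSpace E] [FiniteDimensional ℝ E] (μ : Measure E)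
    [μ.IsAddHaarMeasure] (x y : E) {R r : ℝ} (hR : 0 ≤ R) (hr : 0 < r) :
    μ (Metric.closedBall x R) / μ (Metric.closedBall y r)
      = ENNReal.ofReal ((R / r) ^ Module.finrank ℝ E) := by
  rw [addHaar_closedBall μ x hR, addHaar_closedBall μ y hr.le,
    ENNReal.mul_div_mul_right _ _ (Metric.measure_ball_pos μ 0 one_pos).ne'
      measure_ball_lt_top.ne, ← ENNReal.ofReal_div_of_pos (by positivity), div_pow]

end MeasureTheory.Measure

namespace ProbabilityTheory

lemma map_add_left_cond_le_smul_cond {G : Type*} [AddGroup G] [MeasurableSpace G]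
    [MeasurableAdd G] (μ : Measure G) [μ.IsAddLeftInvariant] {s t : Set G} (w : G)
    (ht_meas : MeasurableSet t) (hst : s ⊆ (w + ·) ⁻¹' t) (ht₀ : μ t ≠ 0) (ht : μ t ≠ ∞) :
    (μ[|s]).map (w + ·) ≤ (μ t / μ s) • μ[|t] := by
  rw [cond, cond, Measure.map_smul, smul_smul, ENNReal.div_eq_inv_mul, mul_assoc,
    ENNReal.mul_inv_cancel ht₀ ht, mul_one]
  gcongr
  calc (μ.restrict s).map (w + ·) ≤ (μ.restrict ((w + ·) ⁻¹' t)).map (w + ·) :=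
        Measure.map_mono (Measure.restrict_mono hst le_rfl) (measurable_const_add w)
    _ = μ.restrict t := by
        rw [← Measure.restrict_map (measurable_const_add w) ht_meas, map_add_left_eq_self]

lemma map_prodMk_add_le_smul_prod_cond_closedBall {Ω E : Type*} [MeasurableSpace Ω]
    [NormedAddCommGroup E] [MeasurableSpace E] [BorelSpace E] [SecondCountableTopology E]
    {P : Measure Ω} [IsFiniteMeasure P] (μ : Measure E) [μ.IsAddLeftInvariant]
    {W V : Ω → E} (hW : Measurable W) (hV : Measurable V) (hindep : IndepFun W V P) {c r : ℝ}
    (hbdd : ∀ᵐ ω ∂P, ‖W ω‖ ≤ c) (hVlaw : P.map V = μ[|Metric.closedBall 0 r])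
    (h₀ : μ (Metric.closedBall 0 (c + r)) ≠ 0) (h_top : μ (Metric.closedBall 0 (c + r)) ≠ ∞) :
    P.map (fun ω => (W ω, W ω + V ω))
      ≤ (μ (Metric.closedBall 0 (c + r)) / μ (Metric.closedBall 0 r))
          • (P.map W).prod (μ[|Metric.closedBall 0 (c + r)]) := by
  have hjoint : P.map (fun ω => (W ω, W ω + V ω))
      = ((P.map W).prod (P.map V)).map (fun p => (p.1, p.1 + p.2)) := by
    rw [← (indepFun_iff_map_prod_eq_prod_map_map hW.aemeasurable hV.aemeasurable).mp hindep,
      Measure.map_map (by fun_prop) (hW.prodMk hV)]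
    rfl
  rw [hjoint, hVlaw]
  refine Measure.map_prod_prodMk_le_smul_prod _ _ _ measurable_add ?_
  filter_upwards [(ae_map_iff hW.aemeasurable
    (measurableSet_le measurable_norm measurable_const)).mpr hbdd] with w hw
  refine map_add_left_cond_le_smul_cond μ w measurableSet_closedBall (fun v hv => ?_) h₀ h_top
  simp only [Set.mem_preimage, mem_closedBall_zero_iff] at hv ⊢
  exact (norm_add_le w v).trans (add_le_add hw hv)

end ProbabilityTheory

namespace InformationTheory

lemma klDiv_le_ofReal_log_of_le_smul {μ ν : Measure α} [IsProbabilityMeasure μ]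
    [IsProbabilityMeasure ν] {K : ℝ≥0∞} (hK : K ≠ ∞) (h : μ ≤ K • ν) :
    klDiv μ ν ≤ ENNReal.ofReal (Real.log K.toReal) := by
  have hac : μ ≪ ν := Measure.absolutelyContinuous_of_le_smul h
  have hle : ∀ᵐ x ∂ν, (μ.rnDeriv ν x).toReal ∈ Set.Icc 0 K.toReal := by
    filter_upwards [Measure.rnDeriv_le_of_le_smul h] with x hx
    exact ⟨ENNReal.toReal_nonneg, ENNReal.toReal_mono hK hx⟩
  have hllr : ∀ᵐ x ∂μ, llr μ ν x ≤ Real.log K.toReal := by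
    filter_upwards [hac.ae_le hle, Measure.rnDeriv_pos hac,
      hac.ae_le (Measure.rnDeriv_lt_top μ ν)] with x hx hpos hlt
    exact Real.log_le_log (ENNReal.toReal_pos hpos.ne' hlt.ne) hx.2
  have hint : Integrable (llr μ ν) μ := by
    obtain ⟨C, hC⟩ := isCompact_Icc.exists_bound_of_continuousOn
      (Real.continuous_mul_log.continuousOn (s := Set.Icc 0 K.toReal))
    rw [← integrable_rnDeriv_mul_log_iff hac]
    refine Integrable.mono' (integrable_const C) ?_ (by filter_upwards [hle] with x hx using hC _ hx)
    exact (Measure.measurable_rnDeriv μ ν).ennreal_toReal.mul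
      (Measure.measurable_rnDeriv μ ν).ennreal_toReal.log |>.aestronglyMeasurable
  rw [klDiv_of_ac_of_integrable hac hint, probReal_univ, probReal_univ, add_sub_cancel_right]
  refine ENNReal.ofReal_le_ofReal ((integral_mono_ae hint (integrable_const _) hllr).trans ?_)
  simp

/-- By the chain rule the gap is `klDiv ρ.fst Q`. -/
lemma klDiv_fst_prod_le [StandardBorelSpace β] [Nonempty β] (ρ : Measure (α × β))
    [IsFiniteMeasure ρ] (Q : Measure α) [IsFiniteMeasure Q] (ν : Measure β)
    [IsProbabilityMeasure ν] : klDiv ρ (ρ.fst.prod ν) ≤ klDiv ρ (Q.prod ν) := by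
  have h := klDiv_compProd_eq_add ρ.fst Q ρ.condKernel (Kernel.const α ν)
  rw [ρ.disintegrate, Measure.compProd_const, Measure.compProd_const] at h
  exact h ▸ le_add_self

lemma klDiv_prod_snd_le [StandardBorelSpace α] [Nonempty α] (ρ : Measure (α × β))
    [IsFiniteMeasure ρ] (ν : Measure α) [IsProbabilityMeasure ν] (Q : Measure β)
    [IsFiniteMeasure Q] : klDiv ρ (ν.prod ρ.snd) ≤ klDiv ρ (ν.prod Q) :=
  calc klDiv ρ (ν.prod ρ.snd)
      = klDiv ((ρ.map Prod.swap).map Prod.swap) ((ρ.snd.prod ν).map Prod.swap) := by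
        rw [Measure.map_map measurable_swap measurable_swap, Prod.swap_swap_eq, Measure.map_id,
          Measure.prod_swap]
    _ ≤ klDiv (ρ.map Prod.swap) (ρ.snd.prod ν) := klDiv_map_le _ _ measurable_swap
    _ = klDiv (ρ.map Prod.swap) ((ρ.map Prod.swap).fst.prod ν) := by rw [Measure.fst_map_swap]
    _ ≤ klDiv (ρ.map Prod.swap) (Q.prod ν) := klDiv_fst_prod_le _ _ _
    _ = klDiv (ρ.map Prod.swap) ((ν.prod Q).map Prod.swap) := by rw [Measure.prod_swap]
    _ ≤ klDiv ρ (ν.prod Q) := klDiv_map_le _ _ measurable_swap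

end InformationTheory

end

/-- Rate bound for compression by uniform-ball dithering: if `‖W‖ ≤ c` a.s.
and `V` is uniform on the ball of radius `ν`, independent of `W`, then
`I(W; W + V) ≤ m·log((c + ν)/ν)`. -/
theorem mutualInfo_add_uniform_ball_le {Ω : Type*} [MeasurableSpace Ω]
    (P : Measure Ω) [IsProbabilityMeasure P]
    {m : ℕ} (W V : Ω → EuclideanSpace ℝ (Fin m))
    (hW : Measurable W) (hV : Measurable V)
    (c ν : ℝ) (hc : 0 < c) (hν : 0 < ν)
    (hbdd : ∀ᵐ ω ∂P, ‖W ω‖ ≤ c)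
    (hVlaw : P.map V
      = (volume (Metric.closedBall (0 : EuclideanSpace ℝ (Fin m)) ν))⁻¹ •
          volume.restrict (Metric.closedBall (0 : EuclideanSpace ℝ (Fin m)) ν))
    (hindep : ProbabilityTheory.IndepFun W V P) :
    mutualInfo P W (fun ω => W ω + V ω)
      ≤ ENNReal.ofReal (m * Real.log ((c + ν) / ν)) := by
  set ρ := P.map fun ω => (W ω, W ω + V ω)
  set Q := (volume : Measure (EuclideanSpace ℝ (Fin m)))[|Metric.closedBall 0 (c + ν)]
  have hB₀ := (Metric.measure_closedBall_pos volume (0 : EuclideanSpace ℝ (Fin m))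
    (by positivity : 0 < c + ν)).ne'
  have : IsProbabilityMeasure Q := cond_isProbabilityMeasure_of_finite hB₀
    measure_closedBall_lt_top.ne
  have : IsProbabilityMeasure (P.map W) := Measure.isProbabilityMeasure_map hW.aemeasurable
  have : IsProbabilityMeasure (P.map fun ω => W ω + V ω) :=
    Measure.isProbabilityMeasure_map (by fun_prop)
  have : IsProbabilityMeasure ρ := Measure.isProbabilityMeasure_map (by fun_prop)
  have hK : volume (Metric.closedBall (0 : EuclideanSpace ℝ (Fin m)) (c + ν))
      / volume (Metric.closedBall (0 : EuclideanSpace ℝ (Fin m)) ν)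
      = ENNReal.ofReal (((c + ν) / ν) ^ m) := by
    rw [Measure.addHaar_closedBall_div_addHaar_closedBall _ _ _ (by positivity) hν,
      finrank_euclideanSpace_fin]
  have hle : ρ ≤ ENNReal.ofReal (((c + ν) / ν) ^ m) • (P.map W).prod Q :=
    hK ▸ map_prodMk_add_le_smul_prod_cond_closedBall volume hW hV hindep hbdd hVlaw hB₀
      measure_closedBall_lt_top.ne
  calc mutualInfo P W (fun ω => W ω + V ω)
      = InformationTheory.klDiv ρ ((P.map W).prod ρ.snd) := by
        rw [mutualInfo, Measure.snd_map_prodMk hW, klDiv_eq_informationTheory_klDiv]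
        simp
    _ ≤ InformationTheory.klDiv ρ ((P.map W).prod Q) := InformationTheory.klDiv_prod_snd_le _ _ _
    _ ≤ ENNReal.ofReal (Real.log (ENNReal.ofReal (((c + ν) / ν) ^ m)).toReal) :=
        InformationTheory.klDiv_le_ofReal_log_of_le_smul ENNReal.ofReal_ne_top hle
    _ = ENNReal.ofReal (m * Real.log ((c + ν) / ν)) := by
        rw [ENNReal.toReal_ofReal (by positivity), Real.log_pow]
end
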